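/- Let F be a finite field of order n, let α be a generator of the multiplicative group F^×, and for x ∈ F^× let log_α(x) ∈ ZMod(n-1) denote the unique exponent k with α^k = x. Then for any distinct i, j ∈ F, the map r ↦ log_α(i - r) - log_α(j - r) is a bijection from F \ {i, j} onto ZMod(n-1) \ {0}; in particular these n - 2 differences of discrete logarithms are pairwise distinct and nonzero modulo n - 1. -/

import Mathlib

/-!
Since `k ↦ α ^ k.val` maps `ZMod (n - 1)` onto `Fˣ`, a set of the same size, it is a bijection
and `l` is its inverse, hence an isomorphism `Fˣ ≃ ZMod (n - 1)` turning products into sums.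
So `l (i - r) - l (j - r) = l ((i - r) / (j - r))`, the Möbius map `r ↦ (i - r) / (j - r)`
sends `F \ {i, j}` bijectively onto `F \ {0, 1}`, and `l` sends that onto the nonzero
residues because `l 1 = 0`.
-/

open Set Function

theorem Set.bijOn_div_sub_sub {K : Type*} [Field K] {i j : K} (hij : i ≠ j) :
    BijOn (fun r => (i - r) / (j - r)) {i, j}ᶜ {0, 1}ᶜ := by
  have hji : j - i ≠ 0 := sub_ne_zero.mpr hij.symm
  -- `g c` solves `(i - r) / (j - r) = c` for `r`
  set g : K → K := fun c => (i - c * j) / (1 - c)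
  have sub_g {c : K} (hc : c ≠ 1) : j - g c ≠ 0 ∧ i - g c = c * (j - g c) := by
    have h1c : 1 - c ≠ 0 := sub_ne_zero.mpr hc.symm
    have hj : j - g c = (j - i) / (1 - c) := by simp only [g]; field_simp; ring
    refine ⟨hj ▸ div_ne_zero hji h1c, ?_⟩
    rw [hj]; simp only [g]; field_simp; ring
  refine InvOn.bijOn (f' := g) ⟨fun r hr => ?_, fun c hc => ?_⟩ (fun r hr => ?_) (fun c hc => ?_)
  all_goals simp only [mem_compl_iff, mem_insert_iff, mem_singleton_iff, not_or] at *
  · have hj : j - r ≠ 0 := sub_ne_zero.mpr (Ne.symm hr.2)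
    have h1 : 1 - (i - r) / (j - r) ≠ 0 := by
      rw [one_sub_div hj]; exact div_ne_zero (by simpa using hji) hj
    simp only [g]
    rw [div_eq_iff h1]
    field_simp
    ring
  · obtain ⟨hj, hi⟩ := sub_g hc.2
    simp only [hi, mul_div_cancel_right₀ _ hj]
  · have hi : i - r ≠ 0 := sub_ne_zero.mpr (Ne.symm hr.1)
    have hj : j - r ≠ 0 := sub_ne_zero.mpr (Ne.symm hr.2)
    refine ⟨div_ne_zero hi hj, fun h => hij ?_⟩
    rw [div_eq_one_iff_eq hj] at h
    exact sub_left_injective h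
  · obtain ⟨hj, hi⟩ := sub_g hc.2
    have hi' : i - g c ≠ 0 := hi ▸ mul_ne_zero hc.1 hj
    exact ⟨fun h => hi' (by rw [h, sub_self]), fun h => hj (by rw [h, sub_self])⟩

theorem pow_zmod_val_add {M : Type*} [Monoid M] {n : ℕ} [NeZero n] {x : M} (hx : x ^ n = 1)
    (a b : ZMod n) : x ^ (a + b).val = x ^ a.val * x ^ b.val := by
  rw [ZMod.val_add, ← pow_eq_pow_mod _ hx, pow_add]

namespace FiniteField

variable {F : Type*} [Field F] [Fintype F]

instance : NeZero (Fintype.card F - 1) :=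
  ⟨Nat.sub_ne_zero_of_lt Fintype.one_lt_card⟩

variable {α : Fˣ} {l : F → ZMod (Fintype.card F - 1)}

theorem injective_pow_val_of_log (hl : ∀ x : F, x ≠ 0 → (α : F) ^ (l x).val = x) :
    Injective fun k : ZMod (Fintype.card F - 1) => (α : F) ^ k.val := by
  have hsurj : Surjective fun k : ZMod (Fintype.card F - 1) => α ^ k.val :=
    fun u => ⟨l u, Units.ext (by simpa using hl u u.ne_zero)⟩
  have hbij := hsurj.bijective_of_nat_card_le <| by
    rw [Nat.card_zmod, Nat.card_units, Nat.card_eq_fintype_card]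
  exact fun a b h => hbij.injective (Units.ext (by simpa using h))

theorem log_mul (hl : ∀ x : F, x ≠ 0 → (α : F) ^ (l x).val = x) {x y : F} (hx : x ≠ 0)
    (hy : y ≠ 0) : l (x * y) = l x + l y := by
  apply injective_pow_val_of_log hl
  simp only [pow_zmod_val_add (pow_card_sub_one_eq_one _ α.ne_zero), hl _ hx, hl _ hy,
    hl _ (mul_ne_zero hx hy)]

theorem log_one (hl : ∀ x : F, x ≠ 0 → (α : F) ^ (l x).val = x) : l 1 = 0 :=
  injective_pow_val_of_log hl <| by simp [hl]

theorem log_div (hl : ∀ x : F, x ≠ 0 → (α : F) ^ (l x).val = x) {x y : F} (hx : x ≠ 0)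
    (hy : y ≠ 0) : l (x / y) = l x - l y := by
  rw [eq_sub_iff_add_eq, ← log_mul hl (div_ne_zero hx hy) hy, div_mul_cancel₀ x hy]

theorem bijOn_log (hl : ∀ x : F, x ≠ 0 → (α : F) ^ (l x).val = x) : BijOn l {0}ᶜ univ :=
  InvOn.bijOn (f' := fun k => (α : F) ^ k.val)
    ⟨fun x hx => hl x hx, fun _ _ => injective_pow_val_of_log hl (hl _ (pow_ne_zero _ α.ne_zero))⟩
    (mapsTo_univ _ _) fun _ _ => pow_ne_zero _ α.ne_zero

theorem bijOn_log_compl_zero_one (hl : ∀ x : F, x ≠ 0 → (α : F) ^ (l x).val = x) :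
    BijOn l {0, 1}ᶜ {0}ᶜ := by
  have := (bijOn_log hl).sdiff_singleton (a := 1) one_ne_zero
  rwa [log_one hl, ← compl_eq_univ_sdiff, sdiff_eq, ← compl_union, ← insert_eq] at this

end FiniteField

theorem discrete_log_differences_bijOn (F : Type*) [Field F] [Fintype F]
    (α : Fˣ)
    (l : F → ZMod (Fintype.card F - 1))
    (hl : ∀ x : F, x ≠ 0 → (α : F) ^ (l x).val = x)
    (i j : F) (hij : i ≠ j) :
    Set.BijOn (fun r => l (i - r) - l (j - r)) (({i, j} : Set F)ᶜ)
      (({0} : Set (ZMod (Fintype.card F - 1)))ᶜ) := by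
  refine ((FiniteField.bijOn_log_compl_zero_one hl).comp (bijOn_div_sub_sub hij)).congr
    fun r hr => ?_
  simp only [mem_compl_iff, mem_insert_iff, mem_singleton_iff, not_or] at hr
  exact FiniteField.log_div hl (sub_ne_zero.mpr (Ne.symm hr.1)) (sub_ne_zero.mpr (Ne.symm hr.2))
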